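/- Rowbottom's theorem: if F is a normal ultrafilter on a measurable cardinal κ and f : [κ]^n → I is a function with |I| < κ, then there exists H ∈ F such that f is constant on [H]^n. -/

import Mathlib

universe u

/-- A normal ultrafilter on the (measurable) cardinal `κ`, presented as a family of
subsets of the ordinals below `κ`: a nonprincipal `κ`-complete ultrafilter closed
under diagonal intersections. -/
structure IsNormalUF (κ : Ordinal) (F : Set (Set Ordinal)) : Prop where
  sets_subset : ∀ A ∈ F, A ⊆ Set.Iio κ
  univ_mem : Set.Iio κ ∈ F
  empty_not_mem : (∅ : Set Ordinal) ∉ F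
  nonprincipal : ∀ α : Ordinal, ({α} : Set Ordinal) ∉ F
  mem_of_superset : ∀ A ∈ F, ∀ B : Set Ordinal, A ⊆ B → B ⊆ Set.Iio κ → B ∈ F
  inter_mem : ∀ A ∈ F, ∀ B ∈ F, A ∩ B ∈ F
  ultra : ∀ A : Set Ordinal, A ⊆ Set.Iio κ → A ∈ F ∨ Set.Iio κ \ A ∈ F
  complete : ∀ μ < κ, ∀ X : Ordinal → Set Ordinal, (∀ i < μ, X i ∈ F) →
      {β | β < κ ∧ ∀ i < μ, β ∈ X i} ∈ F
  normal : ∀ X : Ordinal → Set Ordinal, (∀ γ < κ, X γ ∈ F) →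
      {β | β < κ ∧ ∀ γ < β, β ∈ X γ} ∈ F

-- every F-set is infinite
lemma memF_infinite {κ : Ordinal.{u}} {F : Set (Set Ordinal.{u})} (hF : IsNormalUF κ F)
    {A : Set Ordinal.{u}} (hA : A ∈ F) : A.Infinite := by
  intro hfin
  have key : ∀ n : ℕ, ∀ A ∈ F, A.Finite → A.ncard ≤ n → False := by
    intro n
    induction n with
    | zero =>
      intro A hA hfin hc
      have : A = ∅ := (Set.ncard_eq_zero hfin).mp (Nat.le_zero.mp hc)
      exact hF.empty_not_mem (this ▸ hA)
    | succ n ih =>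
      intro A hA hfin hc
      have hne : A.Nonempty := by
        rcases A.eq_empty_or_nonempty with h | h
        · exact absurd (h ▸ hA) hF.empty_not_mem
        · exact h
      obtain ⟨α, hα⟩ := hne
      have hαlt : α < κ := hF.sets_subset A hA hα
      have hsing : Set.Iio κ \ {α} ∈ F := by
        rcases hF.ultra {α} (by simpa using hαlt) with h | h
        · exact absurd h (hF.nonprincipal α)
        · exact h
      have hmem : A ∩ (Set.Iio κ \ {α}) ∈ F := hF.inter_mem A hA _ hsing
      have heq : A ∩ (Set.Iio κ \ {α}) = A \ {α} := by
        ext x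
        simp only [Set.mem_inter_iff, Set.mem_diff, Set.mem_Iio, Set.mem_singleton_iff]
        exact ⟨fun ⟨h1, _, h3⟩ => ⟨h1, h3⟩, fun ⟨h1, h2⟩ => ⟨h1, hF.sets_subset A hA h1, h2⟩⟩
      rw [heq] at hmem
      refine ih _ hmem hfin.diff ?_
      have := Set.ncard_diff_singleton_lt_of_mem hα hfin
      omega
  exact key (A.ncard) A hA hfin le_rfl


/-- Rowbottom's theorem (fixed dimension): if `F` is a normal ultrafilter on a
measurable cardinal `κ` and `f : [κ]ⁿ → I` with `|I| < κ`, then there is `H ∈ F`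
on whose `n`-element subsets `f` is constant. -/
theorem stmt2 {κ : Ordinal.{u}} {F : Set (Set Ordinal.{u})}
    (hκ : Cardinal.aleph0 < κ.card) (hF : IsNormalUF κ F)
    {ι : Type u} (hι : Cardinal.mk ι < κ.card) (n : ℕ) (f : Finset Ordinal.{u} → ι) :
    ∃ H ∈ F, ∀ a b : Finset Ordinal.{u},
      ↑a ⊆ H → ↑b ⊆ H → a.card = n → b.card = n → f a = f b := by
  classical
  induction n generalizing f with
  | zero =>
    refine ⟨Set.Iio κ, hF.univ_mem, fun a b _ _ ha hb => ?_⟩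
    rw [Finset.card_eq_zero.mp ha, Finset.card_eq_zero.mp hb]
  | succ n ih =>
    -- induced functions and homogeneous sets
    choose X hXF hXhom using fun α : Ordinal.{u} => ih (fun x => f (insert α x))
    -- pick an n-element subset of each X α
    choose t ht htc using fun α : Ordinal.{u} =>
      (memF_infinite hF (hXF α)).exists_subset_card_eq n
    set g : Ordinal.{u} → ι := fun α => f (insert α (t α)) with hg
    -- diagonal intersection
    set D : Set Ordinal.{u} := {β | β < κ ∧ ∀ γ < β, β ∈ X γ} with hD
    have hDF : D ∈ F := hF.normal X (fun γ _ => hXF γ)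
    -- some fiber of g is in F
    have key : ∃ i : ι, {α | α < κ ∧ g α = i} ∈ F := by
      by_contra hno
      push_neg at hno
      set r := (WellOrderingRel : ι → ι → Prop)
      set e : ι → Ordinal.{u} := fun i => Ordinal.typein r i with he
      set μ := Ordinal.type r with hμ
      have hμκ : μ < κ := by
        by_contra h
        exact absurd (Ordinal.card_le_card (not_lt.mp h)) (not_le.mpr (by rw [hμ, Ordinal.card_type]; exact hι))
      set Y : Ordinal.{u} → Set Ordinal.{u} := fun j =>
        if h : ∃ i, e i = j then Set.Iio κ \ {α | α < κ ∧ g α = h.choose}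
        else Set.Iio κ with hY
      have hYF : ∀ j < μ, Y j ∈ F := by
        intro j _
        by_cases h : ∃ i, e i = j
        · simp only [hY, dif_pos h]
          rcases hF.ultra {α | α < κ ∧ g α = h.choose} (fun x hx => hx.1) with h' | h'
          · exact absurd h' (hno _)
          · exact h'
        · simpa only [hY, dif_neg h] using hF.univ_mem
      have hB : {β | β < κ ∧ ∀ j < μ, β ∈ Y j} ∈ F := hF.complete μ hμκ Y hYF
      have hBempty : {β : Ordinal.{u} | β < κ ∧ ∀ j < μ, β ∈ Y j} = ∅ := by
        ext β
        simp only [Set.mem_setOf_eq, Set.mem_empty_iff_false, iff_false, not_and]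
        intro hβκ hall
        have hj : e (g β) < μ := Ordinal.typein_lt_type r (g β)
        have hmem := hall _ hj
        have hex : ∃ i, e i = e (g β) := ⟨g β, rfl⟩
        rw [hY] at hmem
        simp only [dif_pos hex] at hmem
        have : hex.choose = g β := Ordinal.typein_injective r hex.choose_spec
        exact hmem.2 ⟨hβκ, this.symm⟩
      rw [hBempty] at hB
      exact hF.empty_not_mem hB
    obtain ⟨i, hiF⟩ := key
    refine ⟨D ∩ {α | α < κ ∧ g α = i}, hF.inter_mem D hDF _ hiF, ?_⟩
    -- on this set, f of any (n+1)-subset equals i-value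
    have main : ∀ a : Finset Ordinal.{u}, ↑a ⊆ D ∩ {α | α < κ ∧ g α = i} →
        a.card = n + 1 → f a = i := by
      intro a ha hcard
      have hne : a.Nonempty := Finset.card_pos.mp (by omega)
      set α := a.min' hne with hα
      have hαa : α ∈ a := a.min'_mem hne
      have hαH := ha hαa
      have herase : ↑(a.erase α) ⊆ (X α : Set Ordinal.{u}) := by
        intro β hβ
        simp only [Finset.coe_erase, Set.mem_diff, Set.mem_singleton_iff] at hβ
        obtain ⟨hβa, hβα⟩ := hβ
        have hβD : β ∈ D := (ha hβa).1
        have : α < β := lt_of_le_of_ne (a.min'_le β hβa) (Ne.symm hβα)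
        exact hβD.2 α this
      have hins : insert α (a.erase α) = a := Finset.insert_erase hαa
      have h1 : f a = f (insert α (a.erase α)) := by rw [hins]
      have h2 : f (insert α (a.erase α)) = f (insert α (t α)) :=
        hXhom α (a.erase α) (t α) herase (ht α) (by rw [Finset.card_erase_of_mem hαa, hcard]; omega) (htc α)
      rw [h1, h2]
      exact hαH.2.2
    intro a b ha hb hca hcb
    rw [main a ha hca, main b hb hcb]
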